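/- arXiv:2410.20342 — 3 statements merged into one kernel-verified Lean document; each statement's English description precedes it below -/
import Mathlib

section
/- Ramaré's identity: for any finite set interval of primes [P,Q] and any positive integer n, the sum over factorizations n = p·m with p prime in [P,Q] of 1/(ω_{[P,Q]}(m) + 1_{p∤m}) equals 1 if n has a prime factor in [P,Q], and equals 0 otherwise. Here ω_{[P,Q]}(m) denotes the number of distinct prime divisors of m lying in [P,Q]. -/
/-- Ramaré's identity. -/
theorem stmt_0 (P Q n : ℕ) (hn : 0 < n) :
    ∑ p ∈ n.primeFactors.filter (fun p => P ≤ p ∧ p ≤ Q),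
      (1 : ℚ) / ((((n / p).primeFactors.filter (fun q => P ≤ q ∧ q ≤ Q)).card : ℚ)
        + if p ∣ n / p then 0 else 1)
    = if (n.primeFactors.filter (fun p => P ≤ p ∧ p ≤ Q)).Nonempty then 1 else 0 := by
  set S := n.primeFactors.filter (fun p => P ≤ p ∧ p ≤ Q) with hS
  have key : ∀ p ∈ S,
      ((((n / p).primeFactors.filter (fun q => P ≤ q ∧ q ≤ Q)).card : ℚ)
        + if p ∣ n / p then 0 else 1) = (S.card : ℚ) := by
    intro p hp
    rw [hS, Finset.mem_filter, Nat.mem_primeFactors] at hp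
    obtain ⟨⟨hpP, hpdvd, _⟩, hPQ⟩ := hp
    have hnp : n / p ≠ 0 := by
      have : 0 < n / p := Nat.div_pos (Nat.le_of_dvd hn hpdvd) hpP.pos
      omega
    have hmul : p * (n / p) = n := Nat.mul_div_cancel' hpdvd
    have hn0 : n ≠ 0 := by omega
    have hmem : ∀ q : ℕ, q ≠ p → (q ∈ (n / p).primeFactors ↔ q ∈ n.primeFactors) := by
      intro q hq
      simp only [Nat.mem_primeFactors, hnp, hn0, ne_eq, not_false_eq_true, and_true]
      constructor
      · rintro ⟨hq1, hq2⟩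
        exact ⟨hq1, hq2.trans (Nat.div_dvd_of_dvd hpdvd)⟩
      · rintro ⟨hq1, hq2⟩
        refine ⟨hq1, ?_⟩
        have hcop : Nat.Coprime q p :=
          (Nat.coprime_primes hq1 hpP).mpr hq
        rw [← hmul] at hq2
        exact hcop.dvd_of_dvd_mul_left hq2
    by_cases hpd : p ∣ n / p
    · have heq : (n / p).primeFactors.filter (fun q => P ≤ q ∧ q ≤ Q) = S := by
        rw [hS]
        ext q
        simp only [Finset.mem_filter, and_congr_left_iff]
        intro _
        by_cases hq : q = p
        · subst hq
          simp [Nat.mem_primeFactors, hnp, hpP, hpd, hpdvd, hn0]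
        · exact hmem q hq
      rw [heq, if_pos hpd, add_zero]
    · have hpmem : p ∈ S := by
        rw [hS, Finset.mem_filter, Nat.mem_primeFactors]
        exact ⟨⟨hpP, hpdvd, by omega⟩, hPQ⟩
      have heq : (n / p).primeFactors.filter (fun q => P ≤ q ∧ q ≤ Q) = S.erase p := by
        ext q
        rw [Finset.mem_erase]
        simp only [hS, Finset.mem_filter, and_congr_left_iff]
        constructor
        · rintro ⟨hq1, hq2⟩
          have hq : q ≠ p := by
            rintro rfl
            exact hpd (Nat.mem_primeFactors.mp hq1).2.1
          exact ⟨hq, ((hmem q hq).mp hq1), hq2⟩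
        · rintro ⟨hq, hq1, hq2⟩
          exact ⟨(hmem q hq).mpr hq1, hq2⟩
      rw [heq, if_neg hpd, Finset.card_erase_of_mem hpmem]
      have : 1 ≤ S.card := Finset.card_pos.mpr ⟨p, hpmem⟩
      rw [Nat.cast_sub this]
      ring
  rw [Finset.sum_congr rfl (fun p hp => by rw [key p hp])]
  rw [Finset.sum_const, nsmul_eq_mul]
  by_cases hne : S.Nonempty
  · rw [if_pos hne]
    have : (S.card : ℚ) ≠ 0 := by
      simp [Finset.card_eq_zero, Finset.nonempty_iff_ne_empty.mp hne]
    field_simp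
  · rw [if_neg hne]
    rw [Finset.not_nonempty_iff_eq_empty] at hne
    simp [hne]
end

section
/- Let α_1, …, α_d be complex numbers with Σ_{k≥0} λ(p^k)x^k = exp(Σ_{v≥1} a(p^v) x^v/v) where a(p^v) = Σ_j α_j^v, and let Σ_{k≥0} μ(p^k)x^k = exp(Σ_{v≥1} |a(p^v)|^2 x^v/v). Then |λ(p^k)|^2 ≤ μ(p^k) for all k ≥ 0. -/
/-!
If `F = exp G` with `G' = ∑ b_v x^v`, then `F' = G' F`, so the Taylor coefficients of `F` obey
`(k + 1) c_{k+1} = ∑_{i+j=k} b_i c_j` with `c_0 = 1`; the coefficients `C_k` for the weights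
`|b_v|^2` obey the same recursion. Cauchy–Schwarz over the `k + 1` terms of the convolution gives
`((k + 1) |c_{k+1}|)^2 ≤ (k + 1) ∑_{i+j=k} |b_i|^2 |c_j|^2`, and strong induction on `k` turns
this into `|c_k|^2 ≤ C_k`.
-/

open Filter Topology FormalMultilinearSeries Finset
open scoped NNReal

section PowerSeries

variable {𝕜 : Type*} [NontriviallyNormedField 𝕜] {c a : ℕ → 𝕜} {f g : 𝕜 → 𝕜}

theorem hasFPowerSeriesAt_ofScalars_iff :
    HasFPowerSeriesAt f (ofScalars 𝕜 c) 0 ↔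
      ∀ᶠ z in 𝓝 0, HasSum (fun n => c n * z ^ n) (f z) := by
  simp only [hasFPowerSeriesAt_iff, coeff_ofScalars, smul_eq_mul, zero_add, mul_comm]

theorem eventually_summable_norm_mul_pow (hc : 0 < (ofScalars 𝕜 c).radius) :
    ∀ᶠ z in 𝓝 0, Summable fun n => ‖c n * z ^ n‖ := by
  filter_upwards [Metric.eball_mem_nhds (0 : 𝕜) hc] with z hz
  simpa only [ofScalars_apply_eq, smul_eq_mul] using (ofScalars 𝕜 c).summable_norm_apply hz

theorem HasFPowerSeriesAt.mul_ofScalars [CompleteSpace 𝕜]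
    (hf : HasFPowerSeriesAt f (ofScalars 𝕜 a) 0) (hg : HasFPowerSeriesAt g (ofScalars 𝕜 c) 0) :
    HasFPowerSeriesAt (f * g)
      (ofScalars 𝕜 fun n => ∑ p ∈ antidiagonal n, a p.1 * c p.2) 0 := by
  rw [hasFPowerSeriesAt_ofScalars_iff]
  filter_upwards [hasFPowerSeriesAt_ofScalars_iff.mp hf, hasFPowerSeriesAt_ofScalars_iff.mp hg,
    eventually_summable_norm_mul_pow hf.radius_pos, eventually_summable_norm_mul_pow hg.radius_pos]
    with z hfz hgz hfn hgn
  have hterm : ∀ n, ∑ p ∈ antidiagonal n, a p.1 * z ^ p.1 * (c p.2 * z ^ p.2) =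
      (∑ p ∈ antidiagonal n, a p.1 * c p.2) * z ^ n := fun n => by
    rw [sum_mul]
    refine sum_congr rfl fun p hp => ?_
    rw [← mem_antidiagonal.mp hp, pow_add]
    ring
  have hsum := (summable_norm_sum_mul_antidiagonal_of_summable_norm hfn hgn).of_norm
  rw [Pi.mul_apply, ← hfz.tsum_eq, ← hgz.tsum_eq,
    tsum_mul_tsum_eq_tsum_sum_antidiagonal_of_summable_norm hfn hgn]
  simpa only [hterm] using hsum.hasSum

theorem HasFPowerSeriesAt.deriv_ofScalars [CompleteSpace 𝕜]
    (hf : HasFPowerSeriesAt f (ofScalars 𝕜 c) 0) :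
    HasFPowerSeriesAt (deriv f) (ofScalars 𝕜 fun n => (n + 1) * c (n + 1)) 0 := by
  obtain ⟨r, hr⟩ := hf
  have h := ((ContinuousLinearMap.apply 𝕜 𝕜 (1 : 𝕜)).comp_hasFPowerSeriesOnBall
    hr.fderiv).hasFPowerSeriesAt
  rw [hasFPowerSeriesAt_iff] at h
  rw [hasFPowerSeriesAt_ofScalars_iff]
  filter_upwards [h] with z hz
  have hcoeff : ∀ n, ((ContinuousLinearMap.apply 𝕜 𝕜 (1 : 𝕜)).compFormalMultilinearSeries
      (ofScalars 𝕜 c).derivSeries).coeff n = (ofScalars 𝕜 c).derivSeries.coeff n 1 :=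
    fun n => rfl
  simpa [hcoeff, mul_comm] using hz

theorem radius_ofScalars_pos_of_norm_le {C : ℝ} (R : ℝ≥0) (hc : ∀ n, ‖c n‖ ≤ C * R ^ n) :
    0 < (ofScalars 𝕜 c).radius := by
  have hC : 0 ≤ C := by simpa using (norm_nonneg _).trans (hc 0)
  refine lt_of_lt_of_le (by simp)
    ((ofScalars 𝕜 c).le_radius_of_bound C (r := (R + 1)⁻¹) fun n => ?_)
  have hR : (R : ℝ) / (R + 1) ≤ 1 := div_le_one_of_le₀ (by linarith) (by positivity)
  calc ‖ofScalars 𝕜 c n‖ * (((R + 1)⁻¹ : ℝ≥0) : ℝ) ^ n ≤ C * R ^ n * ((R : ℝ) + 1)⁻¹ ^ n := by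
        rw [ofScalars_norm]; push_cast; gcongr; exact hc n
    _ = C * ((R : ℝ) / (R + 1)) ^ n := by rw [div_pow, inv_pow]; ring
    _ ≤ C := mul_le_of_le_one_right hC (pow_le_one₀ (by positivity) hR)

end PowerSeries

section Primitive

variable {𝕜 : Type*} [RCLike 𝕜]

def primitiveCoeffs (b : ℕ → 𝕜) : ℕ → 𝕜
  | 0 => 0
  | n + 1 => b n / (n + 1)

theorem hasFPowerSeriesAt_primitive {b : ℕ → 𝕜} (hb : 0 < (ofScalars 𝕜 b).radius) :
    HasFPowerSeriesAt (fun x => ∑' v, b v * x ^ (v + 1) / ((v : 𝕜) + 1))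
      (ofScalars 𝕜 (primitiveCoeffs b)) 0 := by
  rw [hasFPowerSeriesAt_ofScalars_iff]
  filter_upwards [eventually_summable_norm_mul_pow hb] with z hz
  have hle : ∀ v, ‖b v * z ^ (v + 1) / ((v : 𝕜) + 1)‖ ≤ ‖z‖ * ‖b v * z ^ v‖ := fun v => by
    have : (1 : ℝ) ≤ ‖(v : 𝕜) + 1‖ := by
      rw [← Nat.cast_succ, RCLike.norm_natCast]; exact_mod_cast Nat.succ_pos v
    rw [norm_div, pow_succ, ← mul_assoc, norm_mul _ z, mul_comm ‖z‖]
    exact div_le_self (by positivity) this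
  have hsum := ((hz.mul_left ‖z‖).of_nonneg_of_le (fun _ => norm_nonneg _) hle).of_norm
  have h := (hasSum_nat_add_iff (f := fun n => primitiveCoeffs b n * z ^ n) 1).mp
    (by simpa only [primitiveCoeffs, Nat.cast_add, Nat.cast_one, div_mul_eq_mul_div]
      using hsum.hasSum)
  simpa [primitiveCoeffs] using h

end Primitive

def SatisfiesExpRecursion (b c : ℕ → ℂ) : Prop :=
  c 0 = 1 ∧ ∀ n : ℕ, (n + 1) * c (n + 1) = ∑ p ∈ antidiagonal n, b p.1 * c p.2

theorem SatisfiesExpRecursion.of_hasFPowerSeriesAt {b c : ℕ → ℂ} {g : ℂ → ℂ}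
    (hg : HasFPowerSeriesAt g (ofScalars ℂ (primitiveCoeffs b)) 0)
    (hf : HasFPowerSeriesAt (fun z => Complex.exp (g z)) (ofScalars ℂ c) 0) :
    SatisfiesExpRecursion b c := by
  constructor
  · have hc0 := hf.coeff_zero fun _ => 1
    have hg0 := hg.coeff_zero fun _ => 1
    rw [ofScalars_apply_eq] at hc0 hg0
    simp only [primitiveCoeffs, pow_zero, smul_eq_mul, mul_one] at hc0 hg0
    rw [hc0, ← hg0, Complex.exp_zero]
  · have hderiv : deriv g * (fun z => Complex.exp (g z)) =ᶠ[𝓝 0]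
        deriv fun z => Complex.exp (g z) := by
      filter_upwards [hg.analyticAt.eventually_analyticAt] with z hz
      exact (mul_comm _ _).trans (hz.differentiableAt.hasDerivAt.cexp.deriv).symm
    have hseries := ofScalars_series_injective ℂ ℂ
      (((hg.deriv_ofScalars.mul_ofScalars hf).congr hderiv).eq_formalMultilinearSeries
        hf.deriv_ofScalars)
    intro n
    rw [← congrFun hseries n]
    refine sum_congr rfl fun p _ => ?_
    rw [primitiveCoeffs, mul_div_cancel₀ _ (Nat.cast_add_one_ne_zero p.1)]

theorem SatisfiesExpRecursion.of_hasSum {b c : ℕ → ℂ} (hb : 0 < (ofScalars ℂ b).radius)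
    (hc : ∃ δ > 0, ∀ x : ℂ, ‖x‖ < δ →
      HasSum (fun k => c k * x ^ k)
        (Complex.exp (∑' v : ℕ, b v * x ^ (v + 1) / ((v : ℂ) + 1)))) :
    SatisfiesExpRecursion b c := by
  refine SatisfiesExpRecursion.of_hasFPowerSeriesAt (hasFPowerSeriesAt_primitive hb)
    (hasFPowerSeriesAt_ofScalars_iff.mpr ?_)
  obtain ⟨δ, hδ, h⟩ := hc
  exact Metric.eventually_nhds_iff.mpr ⟨δ, hδ, fun x hx => h x (by simpa using hx)⟩

theorem SatisfiesExpRecursion.norm_sq_le {b c : ℕ → ℂ} {C : ℕ → ℝ}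
    (hc : SatisfiesExpRecursion b c)
    (hC : SatisfiesExpRecursion (fun v => (‖b v‖ : ℂ) ^ 2) (fun k => (C k : ℂ))) (n : ℕ) :
    ‖c n‖ ^ 2 ≤ C n := by
  induction n using Nat.strong_induction_on with
  | _ n ih =>
  cases n with
  | zero =>
    have hC0 : (C 0 : ℂ) = 1 := hC.1
    norm_cast at hC0
    simp [hc.1, hC0]
  | succ n =>
    have hCrec : ((n : ℝ) + 1) * C (n + 1) = ∑ p ∈ antidiagonal n, ‖b p.1‖ ^ 2 * C p.2 := by
      have h : ((n : ℂ) + 1) * C (n + 1) = ∑ p ∈ antidiagonal n, (‖b p.1‖ : ℂ) ^ 2 * C p.2 :=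
        hC.2 n
      exact_mod_cast h
    have key : ((n + 1) * ‖c (n + 1)‖) ^ 2 ≤ (n + 1) * ((n + 1) * C (n + 1)) :=
      calc ((n + 1) * ‖c (n + 1)‖) ^ 2 = ‖∑ p ∈ antidiagonal n, b p.1 * c p.2‖ ^ 2 := by
            have hnorm : ‖(n : ℂ) + 1‖ = n + 1 := by exact_mod_cast Complex.norm_natCast (n + 1)
            rw [← hc.2 n, norm_mul, hnorm]
        _ ≤ (∑ p ∈ antidiagonal n, ‖b p.1‖ * ‖c p.2‖) ^ 2 := by
            gcongr
            exact (norm_sum_le _ _).trans_eq (sum_congr rfl fun p _ => norm_mul _ _)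
        _ ≤ #(antidiagonal n) * ∑ p ∈ antidiagonal n, (‖b p.1‖ * ‖c p.2‖) ^ 2 :=
            sq_sum_le_card_mul_sum_sq
        _ ≤ (n + 1) * ∑ p ∈ antidiagonal n, ‖b p.1‖ ^ 2 * C p.2 := by
            rw [Nat.card_antidiagonal, Nat.cast_succ]
            gcongr with p hp
            rw [mul_pow]
            gcongr
            exact ih p.2 (by have := mem_antidiagonal.mp hp; omega)
        _ = (n + 1) * ((n + 1) * C (n + 1)) := by rw [hCrec]
    have key' : (n + 1 : ℝ) ^ 2 * ‖c (n + 1)‖ ^ 2 ≤ (n + 1) ^ 2 * C (n + 1) := by linarith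
    exact le_of_mul_le_mul_left key' (by positivity)

section PowerSums

variable {ι : Type*} [Fintype ι] (α : ι → ℂ)

theorem norm_sum_pow_succ_le (v : ℕ) :
    ‖∑ j, α j ^ (v + 1)‖ ≤ Fintype.card ι * (∑ j, ‖α j‖) ^ (v + 1) :=
  calc ‖∑ j, α j ^ (v + 1)‖ ≤ ∑ j, ‖α j‖ ^ (v + 1) := by
        simpa only [norm_pow] using norm_sum_le univ fun j => α j ^ (v + 1)
    _ ≤ ∑ _j : ι, (∑ j, ‖α j‖) ^ (v + 1) := by
        gcongr with j
        exact single_le_sum (fun i _ => norm_nonneg (α i)) (mem_univ j)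
    _ = Fintype.card ι * (∑ j, ‖α j‖) ^ (v + 1) := by simp

theorem radius_ofScalars_sum_pow_succ_pos :
    0 < (ofScalars ℂ fun v => ∑ j, α j ^ (v + 1)).radius := by
  refine radius_ofScalars_pos_of_norm_le (C := Fintype.card ι * ∑ j, ‖α j‖)
    (∑ j, ‖α j‖₊) fun v => ?_
  push_cast
  rw [mul_assoc, ← pow_succ']
  exact norm_sum_pow_succ_le α v

theorem radius_ofScalars_norm_sum_pow_succ_sq_pos :
    0 < (ofScalars ℂ fun v => (‖∑ j, α j ^ (v + 1)‖ : ℂ) ^ 2).radius := by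
  refine radius_ofScalars_pos_of_norm_le (C := (Fintype.card ι * ∑ j, ‖α j‖) ^ 2)
    ((∑ j, ‖α j‖₊) ^ 2) fun v => ?_
  rw [norm_pow, Complex.norm_real, norm_norm]
  push_cast
  calc ‖∑ j, α j ^ (v + 1)‖ ^ 2 ≤ (Fintype.card ι * (∑ j, ‖α j‖) ^ (v + 1)) ^ 2 := by
        gcongr; exact norm_sum_pow_succ_le α v
    _ = _ := by ring

end PowerSums

theorem stmt_4 (d : ℕ) (α : Fin d → ℂ) (lam : ℕ → ℂ) (mu : ℕ → ℝ)
    (hlam : ∃ δ > 0, ∀ x : ℂ, ‖x‖ < δ →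
      HasSum (fun k : ℕ => lam k * x ^ k)
        (Complex.exp (∑' v : ℕ, (∑ j, α j ^ (v + 1)) * x ^ (v + 1) / ((v : ℂ) + 1))))
    (hmu : ∃ δ > 0, ∀ x : ℂ, ‖x‖ < δ →
      HasSum (fun k : ℕ => (mu k : ℂ) * x ^ k)
        (Complex.exp (∑' v : ℕ,
          ((‖∑ j, α j ^ (v + 1)‖ : ℂ)) ^ 2 * x ^ (v + 1) / ((v : ℂ) + 1)))) :
    ∀ k : ℕ, ‖lam k‖ ^ 2 ≤ mu k :=
  (SatisfiesExpRecursion.of_hasSum (radius_ofScalars_sum_pow_succ_pos α) hlam).norm_sq_le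
    (SatisfiesExpRecursion.of_hasSum (radius_ofScalars_norm_sum_pow_succ_sq_pos α) hmu)
end

section
/- Let f : ℕ → ℂ be multiplicative with |f(n)| ≤ τ_d(n), let X ≥ 2 and P ≥ 2. Then Σ over pairs (p, m) with p prime, P ≤ p, p | m, and p·m ≤ X of τ_d(pm)^2 is at most C · X (log X)^{d^2 - 1} / P for a constant C depending only on d. -/
/-- `tauD d n` is the `d`-fold divisor function `τ_d(n)`. -/
noncomputable def tauD (d n : ℕ) : ℕ := Nat.card {x : Fin d → ℕ // ∏ i, x i = n}

open Nat ArithmeticFunction Finset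

-- piece 1: finiteness
lemma tup_finite (d n : ℕ) (hn : n ≠ 0) : Finite {x : Fin d → ℕ // ∏ i, x i = n} := by
  refine Finite.of_injective (fun x => fun i : Fin d => (⟨x.1 i, ?_⟩ : Fin (n+1))) ?_
  · have hd : x.1 i ∣ n := by
      have h := Finset.dvd_prod_of_mem x.1 (Finset.mem_univ i)
      rwa [x.2] at h
    exact Nat.lt_succ_of_le (Nat.le_of_dvd (Nat.pos_of_ne_zero hn) hd)
  · intro x y h
    apply Subtype.ext; funext i
    exact congrArg Fin.val (congrFun h i)

lemma nat_card_sigma {ι : Type*} [Fintype ι] (f : ι → Type*) [∀ i, Finite (f i)] :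
    Nat.card (Σ i, f i) = ∑ i, Nat.card (f i) := by
  letI : ∀ i, Fintype (f i) := fun i => Fintype.ofFinite _
  simp [Nat.card_eq_fintype_card, Fintype.card_sigma]

lemma tauD_succ (d n : ℕ) (hn : n ≠ 0) :
    tauD (d+1) n = ∑ i ∈ n.divisors, tauD d i := by
  have E : {x : Fin (d+1) → ℕ // ∏ i, x i = n} ≃
      Σ ab : n.divisorsAntidiagonal, {y : Fin d → ℕ // ∏ i, y i = (ab.1).2} :=
    { toFun := fun x => ⟨⟨(x.1 0, ∏ i, Fin.tail x.1 i), by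
        rw [Nat.mem_divisorsAntidiagonal]
        exact ⟨((Fin.prod_univ_succ x.1).symm).trans x.2, hn⟩⟩, ⟨Fin.tail x.1, rfl⟩⟩
      invFun := fun s => ⟨Fin.cons s.1.1.1 s.2.1, by
        rw [Fin.prod_univ_succ]
        have h1 : (Fin.cons s.1.1.1 s.2.1 : Fin (d+1) → ℕ) 0 = s.1.1.1 := rfl
        have h2 : ∀ i : Fin d, (Fin.cons s.1.1.1 s.2.1 : Fin (d+1) → ℕ) i.succ = s.2.1 i :=
          fun i => rfl
        simp only [h1, h2]
        rw [s.2.2]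
        exact (Nat.mem_divisorsAntidiagonal.mp s.1.2).1⟩
      left_inv := fun x => Subtype.ext (Fin.cons_self_tail x.1)
      right_inv := fun s => by
        rcases s with ⟨⟨⟨a, b⟩, hab⟩, ⟨y, hy⟩⟩
        have htail : Fin.tail (Fin.cons a y : Fin (d+1) → ℕ) = y := funext fun i => rfl
        have hprod : ∏ i, Fin.tail (Fin.cons a y : Fin (d+1) → ℕ) i = b := by
          rw [htail]; exact hy
        have hfst : (Fin.cons a y : Fin (d+1) → ℕ) 0 = a := rfl
        refine Sigma.ext (Subtype.ext (Prod.ext hfst hprod)) ?_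
        refine (Subtype.heq_iff_coe_eq ?_).mpr htail
        intro z
        dsimp only
        rw [hprod] }
  have hfin : ∀ ab : n.divisorsAntidiagonal, Finite {y : Fin d → ℕ // ∏ i, y i = (ab.1).2} := by
    intro ab
    have := (Nat.mem_divisorsAntidiagonal.mp ab.2).1
    have hb : (ab.1).2 ≠ 0 := by
      intro h; apply hn; rw [← this, h, mul_zero]
    exact tup_finite d _ hb
  rw [tauD, Nat.card_congr E, nat_card_sigma]
  have h1 : ∑ i : {x // x ∈ n.divisorsAntidiagonal},
      Nat.card {y : Fin d → ℕ // ∏ j, y j = (i.1).2} = ∑ ab ∈ n.divisorsAntidiagonal, tauD d ab.2 := by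
    rw [← Finset.sum_attach n.divisorsAntidiagonal (fun ab => tauD d ab.2)]
    rfl
  rw [h1, Nat.sum_divisorsAntidiagonal' (f := fun _ y => tauD d y)]

lemma tauD_zero_left (n : ℕ) : tauD 0 n = if n = 1 then 1 else 0 := by
  rw [tauD]
  split_ifs with h
  · subst h
    have : ∀ x : Fin 0 → ℕ, ∏ i, x i = 1 := fun x => by simp
    rw [Nat.card_eq_one_iff_unique]
    exact ⟨⟨fun a b => Subtype.ext (funext fun i => i.elim0)⟩, ⟨⟨fun i => i.elim0, by simp⟩⟩⟩
  · have : IsEmpty {x : Fin 0 → ℕ // ∏ i, x i = n} := by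
      refine ⟨fun x => h ?_⟩
      rw [← x.2]; simp
    exact Nat.card_eq_zero.mpr (Or.inl this)

lemma tauD_eq_zeta_pow (d n : ℕ) (hn : n ≠ 0) :
    tauD d n = (ArithmeticFunction.zeta ^ d) n := by
  induction d generalizing n with
  | zero =>
      rw [pow_zero, tauD_zero_left]
      simp [ArithmeticFunction.one_apply]
  | succ d ih =>
      rw [tauD_succ d n hn, pow_succ, ArithmeticFunction.mul_zeta_apply]
      exact Finset.sum_congr rfl fun i hi => ih i (Nat.pos_of_mem_divisors hi).ne'

lemma zeta_pow_apply_prime_pow (e a p : ℕ) (hp : p.Prime) :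
    (ArithmeticFunction.zeta ^ (e+1)) (p ^ a) = (a + e).choose a := by
  induction e generalizing a with
  | zero =>
      rw [pow_one, ArithmeticFunction.zeta_apply_ne (pow_ne_zero a hp.pos.ne')]
      simp
  | succ e ih =>
      rw [pow_succ, ArithmeticFunction.mul_zeta_apply,
        Nat.sum_divisors_prime_pow hp]
      have h1 : ∀ i, (ArithmeticFunction.zeta ^ (e+1)) (p ^ i) = (e + i).choose e := by
        intro i
        rw [ih i, Nat.add_comm i e]
        exact Nat.choose_symm_of_eq_add (Nat.add_comm e i)
      calc ∑ i ∈ range (a+1), (ArithmeticFunction.zeta ^ (e+1)) (p ^ i)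
          = ∑ i ∈ range (a+1), (e + i).choose e := Finset.sum_congr rfl fun i _ => h1 i
        _ = ∑ m ∈ Icc e (e + a), m.choose e := by
            refine Finset.sum_nbij' (fun i => e + i) (fun m => m - e) ?_ ?_ ?_ ?_ ?_
            · intro i hi; simp only [Finset.mem_range] at hi
              simp only [Finset.mem_Icc]; omega
            · intro m hm; simp only [Finset.mem_Icc] at hm
              simp only [Finset.mem_range]; omega
            · intro i hi; show e + i - e = i; omega
            · intro m hm; simp only [Finset.mem_Icc] at hm
              show e + (m - e) = m; omega
            · intro i hi; rfl
        _ = (e + a + 1).choose (e + 1) := Nat.sum_Icc_choose _ _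
        _ = (a + (e+1)).choose a := by
            rw [show a + (e+1) = e + a + 1 by omega]
            exact Nat.choose_symm_of_eq_add (by omega : e + a + 1 = (e+1) + a)

lemma zeta_pow_mult (k : ℕ) : (ArithmeticFunction.zeta ^ k :
    ArithmeticFunction ℕ).IsMultiplicative := by
  induction k with
  | zero => rw [pow_zero]; exact ArithmeticFunction.isMultiplicative_one
  | succ k ih => rw [pow_succ]; exact ih.mul ArithmeticFunction.isMultiplicative_zeta

-- binomial inequality 1 : C(a+e,a)^2 ≤ C(a+(e*e+2*e),a)
lemma binom_sq (e : ℕ) : ∀ a : ℕ, ((a+e).choose a)^2 ≤ (a + (e*e+2*e)).choose a := by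
  intro a
  induction a with
  | zero => simp
  | succ a ih =>
      set E := e*e+2*e with hE
      have h1 : (a+e+1) * ((a+e).choose a) = ((a+e+1).choose (a+1)) * (a+1) := by
        have := Nat.add_one_mul_choose_eq (a+e) a
        simpa [Nat.succ_eq_add_one] using this
      have h2 : (a+E+1) * ((a+E).choose a) = ((a+E+1).choose (a+1)) * (a+1) := by
        have := Nat.add_one_mul_choose_eq (a+E) a
        simpa [Nat.succ_eq_add_one] using this
      have key : ((a+1+e).choose (a+1))^2 * ((a+1)*(a+1)) ≤ (a+1+E).choose (a+1) * ((a+1)*(a+1)) := by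
        have e1 : ((a+1+e).choose (a+1)) * (a+1) = (a+e+1) * ((a+e).choose a) := by
          rw [show a+1+e = a+e+1 by omega]; omega
        have e2 : ((a+1+E).choose (a+1)) * (a+1) = (a+E+1) * ((a+E).choose a) := by
          rw [show a+1+E = a+E+1 by omega]; omega
        have lhs : ((a+1+e).choose (a+1))^2 * ((a+1)*(a+1)) =
            ((a+e+1) * ((a+e).choose a))^2 := by
          rw [← e1]; ring
        rw [lhs]
        have step1 : ((a+e+1) * ((a+e).choose a))^2 ≤ (a+e+1)^2 * ((a + E).choose a) := by
          have := Nat.mul_le_mul_left ((a+e+1)^2) ih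
          calc ((a+e+1) * ((a+e).choose a))^2 = (a+e+1)^2 * ((a+e).choose a)^2 := by ring
            _ ≤ (a+e+1)^2 * ((a + E).choose a) := this
        refine step1.trans ?_
        have hcoef : (a+e+1)^2 ≤ (a+E+1)*(a+1) := by
          show (a+e+1)^2 ≤ (a+(e*e+2*e)+1)*(a+1)
          nlinarith [Nat.zero_le (a*(e*e))]
        calc (a+e+1)^2 * ((a + E).choose a) ≤ ((a+E+1)*(a+1)) * ((a + E).choose a) :=
              Nat.mul_le_mul_right _ hcoef
          _ = ((a+E+1) * ((a+E).choose a)) * (a+1) := by ring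
          _ = (((a+E+1).choose (a+1)) * (a+1)) * (a+1) := by rw [h2]
          _ = (a+1+E).choose (a+1) * ((a+1)*(a+1)) := by
              rw [show a+1+E = a+E+1 by omega]; ring
      exact Nat.le_of_mul_le_mul_right key (by positivity)

-- binomial inequality 2 : C(b+2+e, b+2) ≤ C(2+e,2) * C(b+e,b)
lemma binom_split (e : ℕ) : ∀ b : ℕ, (b+2+e).choose (b+2) ≤ ((2+e).choose 2) * ((b+e).choose b) := by
  intro b
  induction b with
  | zero => simp [Nat.choose_symm_of_eq_add (Nat.add_comm 2 e)]
  | succ b ih =>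
      have h1 : (b+3+e) * ((b+2+e).choose (b+2)) = ((b+3+e).choose (b+3)) * (b+3) := by
        have := Nat.add_one_mul_choose_eq (b+2+e) (b+2)
        have h : b+2+e+1 = b+3+e := by omega
        have h' : b+2+1 = b+3 := by omega
        simpa [Nat.succ_eq_add_one, h, h'] using this
      have h2 : (b+e+1) * ((b+e).choose b) = ((b+e+1).choose (b+1)) * (b+1) := by
        have := Nat.add_one_mul_choose_eq (b+e) b
        simpa [Nat.succ_eq_add_one] using this
      have key : ((b+3+e).choose (b+3)) * ((b+3)*(b+1)) ≤
          (((2+e).choose 2) * ((b+1+e).choose (b+1))) * ((b+3)*(b+1)) := by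
        calc ((b+3+e).choose (b+3)) * ((b+3)*(b+1))
            = ((b+3+e) * ((b+2+e).choose (b+2))) * (b+1) := by
              rw [show ((b+3+e).choose (b+3)) * ((b+3)*(b+1)) =
                (((b+3+e).choose (b+3)) * (b+3)) * (b+1) by ring, ← h1]
          _ ≤ ((b+3+e) * (((2+e).choose 2) * ((b+e).choose b))) * (b+1) := by
              have := Nat.mul_le_mul_left (b+3+e) ih
              exact Nat.mul_le_mul_right _ this
          _ = ((2+e).choose 2) * (((b+3+e) * (b+1)) * ((b+e).choose b)) := by ring
          _ ≤ ((2+e).choose 2) * (((b+e+1) * (b+3)) * ((b+e).choose b)) := by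
              refine Nat.mul_le_mul_left _ (Nat.mul_le_mul_right _ ?_)
              nlinarith
          _ = ((2+e).choose 2) * (((b+e+1) * ((b+e).choose b)) * (b+3)) := by ring
          _ = ((2+e).choose 2) * ((((b+e+1).choose (b+1)) * (b+1)) * (b+3)) := by rw [h2]
          _ = (((2+e).choose 2) * ((b+1+e).choose (b+1))) * ((b+3)*(b+1)) := by
              rw [show b+1+e = b+e+1 by omega]; ring
      exact Nat.le_of_mul_le_mul_right key (by positivity)

lemma zeta_pow_sq_le (e n : ℕ) (hn : n ≠ 0) :
    ((ArithmeticFunction.zeta ^ (e+1) : ArithmeticFunction ℕ) n)^2 ≤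
    (ArithmeticFunction.zeta ^ (e*e+2*e+1) : ArithmeticFunction ℕ) n := by
  rw [(zeta_pow_mult (e+1)).multiplicative_factorization _ hn,
    (zeta_pow_mult (e*e+2*e+1)).multiplicative_factorization _ hn]
  rw [Finsupp.prod, Finsupp.prod, ← Finset.prod_pow]
  refine Finset.prod_le_prod' fun p hp => ?_
  have hpp : p.Prime := Nat.prime_of_mem_primeFactors (by rwa [← Nat.support_factorization])
  rw [zeta_pow_apply_prime_pow e _ p hpp, zeta_pow_apply_prime_pow (e*e+2*e) _ p hpp]
  exact binom_sq e _

lemma zeta_pow_submult (e p k : ℕ) (hp : p.Prime) (hk : k ≠ 0) :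
    (ArithmeticFunction.zeta ^ (e+1) : ArithmeticFunction ℕ) (p^2*k) ≤
    ((2+e).choose 2) * (ArithmeticFunction.zeta ^ (e+1) : ArithmeticFunction ℕ) k := by
  set f := (ArithmeticFunction.zeta ^ (e+1) : ArithmeticFunction ℕ) with hf
  set b := k.factorization p with hb
  set k' := k / p ^ b with hk'
  have hsplit : p ^ b * k' = k := Nat.ordProj_mul_ordCompl_eq_self k p
  have hcop : Nat.Coprime p k' := Nat.coprime_ordCompl hp hk
  have h1 : p^2 * k = p^(b+2) * k' := by rw [← hsplit]; ring
  have hm := zeta_pow_mult (e+1)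
  have h2 : f (p^(b+2) * k') = f (p^(b+2)) * f k' :=
    hm.map_mul_of_coprime (Nat.Coprime.pow_left _ hcop)
  have h3 : f (p^(b+2)) ≤ ((2+e).choose 2) * f (p^b) := by
    rw [hf, zeta_pow_apply_prime_pow e _ p hp, zeta_pow_apply_prime_pow e _ p hp]
    calc (b+2+e).choose (b+2) ≤ ((2+e).choose 2) * ((b+e).choose b) := binom_split e b
      _ = ((2+e).choose 2) * ((b+e).choose b) := rfl
  have h4 : f (p^b) * f k' = f k := by
    rw [← hm.map_mul_of_coprime (Nat.Coprime.pow_left _ hcop), hsplit]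
  calc f (p^2*k) = f (p^(b+2)) * f k' := by rw [h1, h2]
    _ ≤ (((2+e).choose 2) * f (p^b)) * f k' := Nat.mul_le_mul_right _ h3
    _ = ((2+e).choose 2) * (f (p^b) * f k') := by ring
    _ = ((2+e).choose 2) * f k := by rw [h4]

lemma harmonic_le : ∀ Y : ℕ, ∑ a ∈ Icc 1 Y, (1/(a:ℝ)) ≤ 1 + Real.log Y := by
  intro Y
  induction Y with
  | zero => simp
  | succ Y ih =>
      rw [Finset.sum_Icc_succ_top (by omega : 1 ≤ Y+1)]
      rcases Nat.eq_zero_or_pos Y with hY | hY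
      · subst hY; simp
      have hlog : (1:ℝ)/(Y+1) ≤ Real.log (Y+1) - Real.log Y := by
        have h1 : (0:ℝ) < Y := by exact_mod_cast hY
        have h2 : (0:ℝ) < (Y:ℝ)/(Y+1) := by positivity
        have := Real.log_le_sub_one_of_pos h2
        rw [Real.log_div h1.ne' (by positivity)] at this
        have harith : (Y:ℝ)/(Y+1) - 1 = -(1/(Y+1)) := by field_simp; ring
        rw [harith] at this
        linarith
      push_cast
      push_cast at ih
      linarith

lemma inv_sq_sum_le (Q : ℕ) (hQ : 2 ≤ Q) : ∀ X : ℕ, ∑ n ∈ Icc Q X, (1/(n:ℝ)^2) ≤ (2:ℝ)/(Q:ℝ) := by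
  have key : ∀ X : ℕ, Q - 1 ≤ X → ∑ n ∈ Icc Q X, (1/(n:ℝ)^2) ≤ 1/(Q-1:ℝ) - 1/(X:ℝ) := by
    intro X hX
    induction X, hX using Nat.le_induction with
    | base =>
        have : Icc Q (Q-1) = ∅ := by
          apply Finset.Icc_eq_empty; omega
        rw [this]
        have : ((Q:ℝ)-1) = ((Q-1:ℕ):ℝ) := by
          have : (1:ℕ) ≤ Q := by omega
          push_cast [this]; ring
        simp [← this]
    | succ X hX ih =>
        rw [Finset.sum_Icc_succ_top (by omega : Q ≤ X+1)]
        have hXpos : (0:ℝ) < X := by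
          have : 1 ≤ X := by omega
          exact_mod_cast this
        have hterm : (1/((X:ℝ)+1)^2) ≤ 1/(X:ℝ) - 1/((X:ℝ)+1) := by
          rw [div_sub_div _ _ hXpos.ne' (by positivity)]
          rw [div_le_div_iff₀ (by positivity) (by positivity)]
          ring_nf
          nlinarith
        push_cast
        push_cast at ih
        linarith
  intro X
  rcases le_or_gt Q X with h | h
  · have h2 := key X (by omega)
    have hXpos : (0:ℝ) < X := by
      have : 1 ≤ X := by omega
      exact_mod_cast this
    have hQ1 : (1:ℝ) ≤ (Q:ℝ) - 1 := by
      have : (2:ℝ) ≤ Q := by exact_mod_cast hQ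
      linarith
    have : 1/((Q:ℝ)-1) ≤ 2/Q := by
      rw [div_le_div_iff₀ (by linarith) (by positivity)]
      have : (2:ℝ) ≤ Q := by exact_mod_cast hQ
      linarith
    have hx : 0 < 1/(X:ℝ) := by positivity
    linarith
  · have : Icc Q X = ∅ := Finset.Icc_eq_empty (by omega)
    rw [this, Finset.sum_empty]
    positivity

lemma divisor_double_sum (F : ℕ → ℝ) (Y : ℕ) :
    ∑ n ∈ Icc 1 Y, ∑ i ∈ n.divisors, F i = ∑ a ∈ Icc 1 Y, ∑ k ∈ Icc 1 (Y/a), F k := by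
  rw [Finset.sum_sigma', Finset.sum_sigma']
  refine Finset.sum_nbij' (fun s => ⟨s.1/s.2, s.2⟩) (fun s => ⟨s.1*s.2, s.2⟩) ?_ ?_ ?_ ?_ ?_
  · rintro ⟨n, i⟩ hs
    simp only [Finset.mem_sigma, Finset.mem_Icc, Nat.mem_divisors] at hs ⊢
    obtain ⟨⟨h1, h2⟩, hdvd, hne⟩ := hs
    have hipos : 0 < i := Nat.pos_of_dvd_of_pos hdvd (by omega)
    have hq : 0 < n / i := Nat.div_pos (Nat.le_of_dvd (by omega) hdvd) hipos
    refine ⟨⟨hq, le_trans (Nat.div_le_self n i) h2⟩, hipos, ?_⟩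
    rw [Nat.le_div_iff_mul_le hq]
    rw [Nat.mul_comm]
    calc (n/i) * i = n := Nat.div_mul_cancel hdvd
      _ ≤ Y := h2
  · rintro ⟨a, k⟩ hs
    simp only [Finset.mem_sigma, Finset.mem_Icc, Nat.mem_divisors] at hs ⊢
    obtain ⟨⟨h1, h2⟩, h3, h4⟩ := hs
    have hak : a * k ≤ Y := by
      rw [Nat.le_div_iff_mul_le (by omega)] at h4
      calc a * k = k * a := Nat.mul_comm a k
        _ ≤ Y := h4
    exact ⟨⟨Nat.mul_pos (by omega) (by omega), hak⟩, ⟨a, Nat.mul_comm a k⟩,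
      Nat.mul_ne_zero (by omega) (by omega)⟩
  · rintro ⟨n, i⟩ hs
    simp only [Finset.mem_sigma, Finset.mem_Icc, Nat.mem_divisors] at hs
    obtain ⟨⟨h1, h2⟩, hdvd, hne⟩ := hs
    simp only [Sigma.mk.inj_iff, heq_eq_eq, and_true]
    exact Nat.div_mul_cancel hdvd
  · rintro ⟨a, k⟩ hs
    simp only [Finset.mem_sigma, Finset.mem_Icc, Nat.mem_divisors] at hs
    obtain ⟨⟨h1, h2⟩, h3, h4⟩ := hs
    simp only [Sigma.mk.inj_iff, heq_eq_eq, and_true]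
    rw [Nat.mul_div_assoc a dvd_rfl, Nat.div_self (by omega), Nat.mul_one]
  · intros; rfl

lemma sum_zeta_pow_le (D : ℕ) (hD : 1 ≤ D) : ∀ Y : ℕ,
    ∑ n ∈ Icc 1 Y, (((ArithmeticFunction.zeta ^ D : ArithmeticFunction ℕ) n : ℝ)) ≤
      (Y:ℝ) * (1 + Real.log Y)^(D-1) := by
  induction D, hD using Nat.le_induction with
  | base =>
      intro Y
      have : ∀ n ∈ Icc 1 Y, ((ArithmeticFunction.zeta ^ 1 : ArithmeticFunction ℕ) n : ℝ) = 1 := by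
        intro n hn
        simp only [Finset.mem_Icc] at hn
        rw [pow_one, ArithmeticFunction.zeta_apply_ne (by omega)]
        norm_num
      rw [Finset.sum_congr rfl this, Finset.sum_const, Nat.card_Icc]
      simp
  | succ D hD ih =>
      intro Y
      rcases Nat.eq_zero_or_pos Y with hY | hY
      · subst hY; simp
      have hYR : (1:ℝ) ≤ Y := by exact_mod_cast hY
      have hlogY : 0 ≤ Real.log Y := Real.log_nonneg hYR
      have step1 : ∑ n ∈ Icc 1 Y, (((ArithmeticFunction.zeta ^ (D+1) : ArithmeticFunction ℕ) n : ℝ))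
          = ∑ a ∈ Icc 1 Y, ∑ k ∈ Icc 1 (Y/a), ((ArithmeticFunction.zeta ^ D : ArithmeticFunction ℕ) k : ℝ) := by
        rw [← divisor_double_sum]
        refine Finset.sum_congr rfl fun n hn => ?_
        have hpow : (ArithmeticFunction.zeta ^ (D+1) : ArithmeticFunction ℕ) =
            ArithmeticFunction.zeta * ArithmeticFunction.zeta ^ D := pow_succ' _ _
        rw [hpow, ArithmeticFunction.zeta_mul_apply]
        push_cast
        rfl
      rw [step1]
      have step2 : ∀ a ∈ Icc 1 Y,
          ∑ k ∈ Icc 1 (Y/a), ((ArithmeticFunction.zeta ^ D : ArithmeticFunction ℕ) k : ℝ) ≤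
          ((Y:ℝ)/a) * (1 + Real.log Y)^(D-1) := by
        intro a ha
        simp only [Finset.mem_Icc] at ha
        refine (ih (Y/a)).trans ?_
        rcases Nat.eq_zero_or_pos (Y/a) with hq | hq
        · rw [hq]
          simp only [Nat.cast_zero, zero_mul]
          positivity
        have hq1 : (1:ℝ) ≤ ((Y/a : ℕ):ℝ) := by exact_mod_cast hq
        have hE1 : ((Y/a:ℕ):ℝ) ≤ (Y:ℝ)/(a:ℝ) := Nat.cast_div_le
        have hE2 : (1 + Real.log (Y/a:ℕ))^(D-1) ≤ (1 + Real.log Y)^(D-1) := by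
          refine pow_le_pow_left₀ (by
            have := Real.log_nonneg hq1
            linarith) ?_ _
          have : Real.log ((Y/a:ℕ):ℝ) ≤ Real.log Y :=
            Real.log_le_log (by linarith) (by exact_mod_cast Nat.div_le_self Y a)
          linarith
        have h0 : (0:ℝ) ≤ ((Y/a:ℕ):ℝ) := by positivity
        have h1 : (0:ℝ) ≤ (1 + Real.log (Y/a:ℕ))^(D-1) := by
          have := Real.log_nonneg hq1
          positivity
        calc ((Y/a:ℕ):ℝ) * (1 + Real.log (Y/a:ℕ))^(D-1)
            ≤ ((Y:ℝ)/a) * (1 + Real.log (Y/a:ℕ))^(D-1) := mul_le_mul_of_nonneg_right hE1 h1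
          _ ≤ ((Y:ℝ)/a) * (1 + Real.log Y)^(D-1) := by
              refine mul_le_mul_of_nonneg_left hE2 ?_
              have : (1:ℝ) ≤ a := by exact_mod_cast ha.1
              positivity
      calc ∑ a ∈ Icc 1 Y, ∑ k ∈ Icc 1 (Y/a), ((ArithmeticFunction.zeta ^ D : ArithmeticFunction ℕ) k : ℝ)
          ≤ ∑ a ∈ Icc 1 Y, ((Y:ℝ)/a) * (1 + Real.log Y)^(D-1) := Finset.sum_le_sum step2
        _ = ((Y:ℝ) * (1 + Real.log Y)^(D-1)) * ∑ a ∈ Icc 1 Y, (1/(a:ℝ)) := by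
            rw [Finset.mul_sum]
            refine Finset.sum_congr rfl fun a _ => ?_
            ring
        _ ≤ ((Y:ℝ) * (1 + Real.log Y)^(D-1)) * (1 + Real.log Y) := by
            refine mul_le_mul_of_nonneg_left (harmonic_le Y) ?_
            positivity
        _ = (Y:ℝ) * (1 + Real.log Y)^(D+1-1) := by
            rw [show D+1-1 = (D-1)+1 by omega, pow_succ]
            ring

theorem stmt_8 (d : ℕ) (hd : 1 ≤ d) :
    ∃ C > 0, ∀ X P : ℕ, 2 ≤ X → 2 ≤ P →
      ∑ p ∈ (Finset.range (X + 1)).filter (fun p => p.Prime ∧ P ≤ p),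
        ∑ m ∈ (Finset.Icc 1 X).filter (fun m => p ∣ m ∧ p * m ≤ X),
          ((tauD d (p * m) : ℝ)) ^ 2
        ≤ C * X * Real.log X ^ (d ^ 2 - 1) / P := by
  obtain ⟨e, rfl⟩ : ∃ e, d = e + 1 := ⟨d-1, by omega⟩
  set E := e*e+2*e with hE
  have hEd : (e+1)^2 - 1 = E := by
    have h : (e+1)^2 = E + 1 := by rw [hE]; ring
    omega
  have hC₁pos : 0 < (2+E).choose 2 := Nat.choose_pos (by omega)
  set C₁ : ℝ := ((2+E).choose 2 : ℝ) with hC₁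
  have hC₁posR : (0:ℝ) < C₁ := by rw [hC₁]; exact_mod_cast hC₁pos
  refine ⟨C₁ * 3^E * 2, by positivity, ?_⟩
  intro X P hX hP
  have hXR : (2:ℝ) ≤ (X:ℝ) := by exact_mod_cast hX
  have hlogX : 0 ≤ Real.log X := Real.log_nonneg (by linarith)
  have hlogX2 : (1:ℝ)/2 ≤ Real.log X := by
    have h2 : Real.log 2 ≤ Real.log X := Real.log_le_log (by norm_num) hXR
    have := Real.log_two_gt_d9
    linarith
  -- pointwise bound on tauD
  have point : ∀ p k : ℕ, p.Prime → k ≠ 0 →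
      ((tauD (e+1) (p^2*k) : ℝ))^2 ≤ C₁ *
        ((ArithmeticFunction.zeta ^ (E+1) : ArithmeticFunction ℕ) k : ℝ) := by
    intro p k hp hk
    have hne : p^2*k ≠ 0 := Nat.mul_ne_zero (pow_ne_zero 2 hp.pos.ne') hk
    have h1 : (tauD (e+1) (p^2*k))^2 ≤
        (ArithmeticFunction.zeta ^ (E+1) : ArithmeticFunction ℕ) (p^2*k) := by
      rw [tauD_eq_zeta_pow _ _ hne]
      have := zeta_pow_sq_le e (p^2*k) hne
      rwa [show e*e+2*e+1 = E+1 by rw [hE]] at this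
    have h2 : (ArithmeticFunction.zeta ^ (E+1) : ArithmeticFunction ℕ) (p^2*k) ≤
        ((2+E).choose 2) * (ArithmeticFunction.zeta ^ (E+1) : ArithmeticFunction ℕ) k :=
      zeta_pow_submult E p k hp hk
    have := h1.trans h2
    have hcast : ((tauD (e+1) (p^2*k))^2 : ℝ) ≤
        (((2+E).choose 2) * (ArithmeticFunction.zeta ^ (E+1) : ArithmeticFunction ℕ) k : ℝ) := by
      exact_mod_cast this
    push_cast at hcast ⊢
    linarith
  -- bound on each inner sum
  have inner_bound : ∀ p ∈ (Finset.range (X + 1)).filter (fun p => p.Prime ∧ P ≤ p),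
      ∑ m ∈ (Finset.Icc 1 X).filter (fun m => p ∣ m ∧ p * m ≤ X),
        ((tauD (e+1) (p * m) : ℝ)) ^ 2 ≤
      (C₁ * (1 + Real.log X)^E) * ((X:ℝ) * (1/(p:ℝ)^2)) := by
    intro p hpmem
    simp only [Finset.mem_filter, Finset.mem_range] at hpmem
    obtain ⟨hpX, hp, hPp⟩ := hpmem
    have hppos : 0 < p := hp.pos
    have hp2pos : 0 < p^2 := by positivity
    -- reindex
    have hre : ∑ m ∈ (Finset.Icc 1 X).filter (fun m => p ∣ m ∧ p * m ≤ X),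
        ((tauD (e+1) (p * m) : ℝ)) ^ 2 =
        ∑ k ∈ Icc 1 (X / p^2), ((tauD (e+1) (p^2 * k) : ℝ)) ^ 2 := by
      refine Finset.sum_nbij' (fun m => m / p) (fun k => p * k) ?_ ?_ ?_ ?_ ?_
      · intro m hm
        simp only [Finset.mem_filter, Finset.mem_Icc] at hm
        obtain ⟨⟨hm1, hm2⟩, hdvd, hpm⟩ := hm
        simp only [Finset.mem_Icc]
        constructor
        · exact Nat.div_pos (Nat.le_of_dvd (by omega) hdvd) hppos
        · rw [Nat.le_div_iff_mul_le hp2pos]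
          calc m / p * p^2 = (m/p) * p * p := by ring
            _ = m * p := by rw [Nat.div_mul_cancel hdvd]
            _ = p * m := Nat.mul_comm m p
            _ ≤ X := hpm
      · intro k hk
        simp only [Finset.mem_Icc] at hk
        obtain ⟨hk1, hk2⟩ := hk
        rw [Nat.le_div_iff_mul_le hp2pos] at hk2
        simp only [Finset.mem_filter, Finset.mem_Icc]
        have hpk : p * (p * k) ≤ X := by
          calc p * (p * k) = k * p^2 := by ring
            _ ≤ X := hk2
        refine ⟨⟨Nat.mul_pos hppos (by omega), ?_⟩, Dvd.intro k rfl, hpk⟩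
        calc p * k ≤ p * (p * k) := Nat.le_mul_of_pos_left _ hppos
          _ ≤ X := hpk
      · intro m hm
        simp only [Finset.mem_filter, Finset.mem_Icc] at hm
        exact Nat.mul_div_cancel' hm.2.1
      · intro k hk
        show p * k / p = k
        rw [Nat.mul_div_cancel_left k hppos]
      · intro m hm
        simp only [Finset.mem_filter, Finset.mem_Icc] at hm
        rw [show p^2 * (m/p) = p * ((m/p) * p) by ring, Nat.div_mul_cancel hm.2.1]
    rw [hre]
    set q := X / p^2 with hq
    have hqX : q ≤ X := (Nat.div_le_self X (p^2))
    have step1 : ∑ k ∈ Icc 1 q, ((tauD (e+1) (p^2 * k) : ℝ)) ^ 2 ≤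
        C₁ * ∑ k ∈ Icc 1 q, ((ArithmeticFunction.zeta ^ (E+1) : ArithmeticFunction ℕ) k : ℝ) := by
      rw [Finset.mul_sum]
      refine Finset.sum_le_sum fun k hk => ?_
      simp only [Finset.mem_Icc] at hk
      exact point p k hp (by omega)
    have step2 : ∑ k ∈ Icc 1 q, ((ArithmeticFunction.zeta ^ (E+1) : ArithmeticFunction ℕ) k : ℝ) ≤
        (q:ℝ) * (1 + Real.log q)^E := by
      have := sum_zeta_pow_le (E+1) (by omega) q
      simpa using this
    have step3 : (q:ℝ) * (1 + Real.log q)^E ≤ ((X:ℝ) * (1/(p:ℝ)^2)) * (1 + Real.log X)^E := by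
      rcases Nat.eq_zero_or_pos q with h0 | hqpos
      · rw [h0]
        simp only [Nat.cast_zero, zero_mul]
        positivity
      have hq1 : (1:ℝ) ≤ (q:ℝ) := by exact_mod_cast hqpos
      have hlq : 0 ≤ Real.log q := Real.log_nonneg hq1
      have hqle : (q:ℝ) ≤ (X:ℝ) * (1/(p:ℝ)^2) := by
        have := Nat.cast_div_le (α := ℝ) (m := X) (n := p^2)
        push_cast at this
        rw [hq]
        push_cast
        calc ((X / p^2 : ℕ):ℝ) ≤ (X:ℝ)/((p:ℝ)^2) := by push_cast at this ⊢; exact this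
          _ = (X:ℝ) * (1/(p:ℝ)^2) := by ring
      have hlog_le : (1 + Real.log q)^E ≤ (1 + Real.log X)^E := by
        refine pow_le_pow_left₀ (by linarith) ?_ _
        have : Real.log (q:ℝ) ≤ Real.log X :=
          Real.log_le_log (by linarith) (by exact_mod_cast hqX)
        linarith
      calc (q:ℝ) * (1 + Real.log q)^E ≤ ((X:ℝ) * (1/(p:ℝ)^2)) * (1 + Real.log q)^E := by
            refine mul_le_mul_of_nonneg_right hqle (by positivity)
        _ ≤ ((X:ℝ) * (1/(p:ℝ)^2)) * (1 + Real.log X)^E := by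
            refine mul_le_mul_of_nonneg_left hlog_le ?_
            have : (1:ℝ) ≤ (p:ℝ) := by exact_mod_cast hppos
            positivity
    calc ∑ k ∈ Icc 1 q, ((tauD (e+1) (p^2 * k) : ℝ)) ^ 2
        ≤ C₁ * ∑ k ∈ Icc 1 q, ((ArithmeticFunction.zeta ^ (E+1) : ArithmeticFunction ℕ) k : ℝ) := step1
      _ ≤ C₁ * ((q:ℝ) * (1 + Real.log q)^E) := by
          exact mul_le_mul_of_nonneg_left step2 (le_of_lt hC₁posR)
      _ ≤ C₁ * (((X:ℝ) * (1/(p:ℝ)^2)) * (1 + Real.log X)^E) :=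
          mul_le_mul_of_nonneg_left step3 (le_of_lt hC₁posR)
      _ = (C₁ * (1 + Real.log X)^E) * ((X:ℝ) * (1/(p:ℝ)^2)) := by ring
  -- sum over p
  have psum : ∑ p ∈ (Finset.range (X + 1)).filter (fun p => p.Prime ∧ P ≤ p),
      (1/(p:ℝ)^2) ≤ (2:ℝ)/(P:ℝ) := by
    refine le_trans (Finset.sum_le_sum_of_subset_of_nonneg ?_ ?_) (inv_sq_sum_le P hP X)
    · intro p hpm
      simp only [Finset.mem_filter, Finset.mem_range] at hpm
      simp only [Finset.mem_Icc]
      omega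
    · intro i _ _
      positivity
  have main : ∑ p ∈ (Finset.range (X + 1)).filter (fun p => p.Prime ∧ P ≤ p),
      ∑ m ∈ (Finset.Icc 1 X).filter (fun m => p ∣ m ∧ p * m ≤ X),
        ((tauD (e+1) (p * m) : ℝ)) ^ 2 ≤
      (C₁ * (1 + Real.log X)^E) * ((X:ℝ) * ((2:ℝ)/(P:ℝ))) := by
    calc ∑ p ∈ (Finset.range (X + 1)).filter (fun p => p.Prime ∧ P ≤ p),
        ∑ m ∈ (Finset.Icc 1 X).filter (fun m => p ∣ m ∧ p * m ≤ X),
          ((tauD (e+1) (p * m) : ℝ)) ^ 2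
        ≤ ∑ p ∈ (Finset.range (X + 1)).filter (fun p => p.Prime ∧ P ≤ p),
          (C₁ * (1 + Real.log X)^E) * ((X:ℝ) * (1/(p:ℝ)^2)) := Finset.sum_le_sum inner_bound
      _ = (C₁ * (1 + Real.log X)^E) * ((X:ℝ) *
          ∑ p ∈ (Finset.range (X + 1)).filter (fun p => p.Prime ∧ P ≤ p), (1/(p:ℝ)^2)) := by
          rw [Finset.mul_sum, Finset.mul_sum]
      _ ≤ (C₁ * (1 + Real.log X)^E) * ((X:ℝ) * ((2:ℝ)/(P:ℝ))) := by
          refine mul_le_mul_of_nonneg_left (mul_le_mul_of_nonneg_left psum (by positivity)) ?_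
          positivity
  refine main.trans ?_
  have hpow : (1 + Real.log X)^E ≤ 3^E * (Real.log X)^E := by
    calc (1 + Real.log X)^E ≤ (3 * Real.log X)^E := by
          refine pow_le_pow_left₀ (by linarith) (by linarith) _
      _ = 3^E * (Real.log X)^E := mul_pow _ _ _
  rw [hEd]
  have hPpos : (0:ℝ) < (P:ℝ) := by
    have : (2:ℝ) ≤ (P:ℝ) := by exact_mod_cast hP
    linarith
  calc (C₁ * (1 + Real.log X)^E) * ((X:ℝ) * ((2:ℝ)/(P:ℝ)))
      ≤ (C₁ * (3^E * (Real.log X)^E)) * ((X:ℝ) * ((2:ℝ)/(P:ℝ))) := by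
        refine mul_le_mul_of_nonneg_right (mul_le_mul_of_nonneg_left hpow (le_of_lt hC₁posR)) ?_
        positivity
    _ = C₁ * 3^E * 2 * (X:ℝ) * (Real.log X)^E / (P:ℝ) := by
        field_simp
end
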